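/- Let {𝓗,Γ₀,Γ₁} be a unitary boundary triple for A* with T = dom Γ, and for λ ∈ ℂ∖ℝ let γ̂(λ) := {(Γ₀f̂, f̂) : f̂ ∈ N̂_λ(T)} ⊆ 𝓗 × (𝔥×𝔥). Then the closure of γ̂(λ) (in 𝓗 × (𝔥×𝔥)) equals (clos(graph Γ₀) ∩ (N̂_λ(A*) × 𝓗))⁻¹, where clos(graph Γ₀) is the closure in (𝔥×𝔥) × 𝓗 of the graph of Γ₀. In particular: ker(clos γ̂(λ)) = mul(clos(graph Γ₀)); mul(clos γ̂(λ)) = ker(clos(graph Γ₀)) ∩ N̂_λ(A*); ran(clos γ̂(λ)) = dom(clos(graph Γ₀)) ∩ N̂_λ(A*); and dom(clos γ̂(λ)) = {h ∈ 𝓗 : (f̂,h) ∈ clos(graph Γ₀) for some f̂ ∈ N̂_λ(A*)}. -/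

import Mathlib

noncomputable section

open Filter Topology

namespace BT

local notation "⟪" x ", " y "⟫" => @inner ℂ _ _ x y

section Ops
variable {α β γ' : Type*}

def domR (T : Set (α × β)) : Set α := {x | ∃ y, (x, y) ∈ T}
def ranR (T : Set (α × β)) : Set β := {y | ∃ x, (x, y) ∈ T}
def kerR [Zero β] (T : Set (α × β)) : Set α := {x | (x, (0 : β)) ∈ T}
def mulR [Zero α] (T : Set (α × β)) : Set β := {y | ((0 : α), y) ∈ T}
def invR (T : Set (α × β)) : Set (β × α) := {p | (p.2, p.1) ∈ T}
def compR (T₂ : Set (β × γ')) (T₁ : Set (α × β)) : Set (α × γ') :=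
  {p | ∃ y, (p.1, y) ∈ T₁ ∧ (y, p.2) ∈ T₂}
def csum [Add α] [Add β] (T₁ T₂ : Set (α × β)) : Set (α × β) :=
  {p | ∃ q ∈ T₁, ∃ r ∈ T₂, p = (q.1 + r.1, q.2 + r.2)}

def IsLinRel {M : Type*} [AddCommGroup M] [Module ℂ M] (s : Set M) : Prop :=
  ∃ p : Submodule ℂ M, (p : Set M) = s

def IsBddRel [Norm α] [Norm β] (T : Set (α × β)) : Prop :=
  ∃ C : ℝ, ∀ p ∈ T, ‖p.2‖ ≤ C * ‖p.1‖

def BddInv [NormedAddCommGroup α] (T : Set (α × α)) : Prop :=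
  (∀ v, ∃ p ∈ T, p.2 = v) ∧ (∀ p ∈ T, ∀ q ∈ T, p.2 = q.2 → p.1 = q.1) ∧
    ∃ C : ℝ, ∀ p ∈ T, ‖p.1‖ ≤ C * ‖p.2‖
end Ops

section Shifts
variable {α : Type*} [AddCommGroup α] [Module ℂ α]

def shiftSub (T : Set (α × α)) (l : ℂ) : Set (α × α) :=
  {p | ∃ q ∈ T, p = (q.1, q.2 - l • q.1)}
def shiftAdd (T : Set (α × α)) (l : ℂ) : Set (α × α) :=
  {p | ∃ q ∈ T, p = (q.1, q.2 + l • q.1)}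
def hatN (T : Set (α × α)) (l : ℂ) : Set (α × α) := {p ∈ T | p.2 = l • p.1}
def Nlam (T : Set (α × α)) (l : ℂ) : Set α := {f | (f, l • f) ∈ T}
def Hrel (A0s : Set (α × α)) (l : ℂ) : Set (α × (α × α)) :=
  {q | q.2 ∈ A0s ∧ q.2.2 - l • q.2.1 = q.1}
end Shifts

section InnerDefs
variable {E F : Type*} [NormedAddCommGroup E] [InnerProductSpace ℂ E]
  [NormedAddCommGroup F] [InnerProductSpace ℂ F]

def adjR (S : Set (F × E)) : Set (E × F) :=
  {p | ∀ q ∈ S, ⟪p.1, q.2⟫ = ⟪p.2, q.1⟫}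

def IsClosedSymRel (A : Set (E × E)) : Prop :=
  IsLinRel A ∧ IsClosed A ∧ A ⊆ adjR A

def kIP (p q : E × E) : ℂ := -Complex.I * ⟪q.1, p.2⟫ + Complex.I * ⟪q.2, p.1⟫

def kreinOrth (S : Set (E × E)) : Set (E × E) := {v | ∀ u ∈ S, kIP u v = 0}

def GreenPair (Γ : Set ((E × E) × (F × F))) : Prop :=
  ∀ p ∈ Γ, ∀ q ∈ Γ,
    ⟪q.1.1, p.1.2⟫ - ⟪q.1.2, p.1.1⟫ = ⟪q.2.1, p.2.2⟫ - ⟪q.2.2, p.2.1⟫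

def G0 (Γ : Set ((E × E) × (F × F))) : Set ((E × E) × F) := {p | ∃ h', (p.1, (p.2, h')) ∈ Γ}
def G1 (Γ : Set ((E × E) × (F × F))) : Set ((E × E) × F) := {p | ∃ h, (p.1, (h, p.2)) ∈ Γ}
def A0 (Γ : Set ((E × E) × (F × F))) : Set (E × E) := kerR (G0 Γ)
def A1 (Γ : Set ((E × E) × (F × F))) : Set (E × E) := kerR (G1 Γ)
def weyl (Γ : Set ((E × E) × (F × F))) (l : ℂ) : Set (F × F) :=
  {p | ∃ f : E, ((f, l • f), p) ∈ Γ}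
def gfield (Γ : Set ((E × E) × (F × F))) (l : ℂ) : Set (F × E) :=
  {p | ∃ h', ((p.2, l • p.2), (p.1, h')) ∈ Γ}

def kreinAdj (Γ : Set ((E × E) × (F × F))) : Set ((F × F) × (E × E)) :=
  {q | ∀ p ∈ Γ, kIP p.1 q.2 = kIP p.2 q.1}

def IsIsomPair (A : Set (E × E)) (Γ : Set ((E × E) × (F × F))) : Prop :=
  IsLinRel Γ ∧ domR Γ ⊆ adjR A ∧ GreenPair Γ
def IsDomDense (A : Set (E × E)) (Γ : Set ((E × E) × (F × F))) : Prop :=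
  closure (domR Γ) = adjR A
def IsABPair (A : Set (E × E)) (Γ : Set ((E × E) × (F × F))) : Prop :=
  IsIsomPair A Γ ∧ IsDomDense A Γ ∧ Dense (ranR (G0 Γ)) ∧ A0 Γ = adjR (A0 Γ)
def IsBPair (A : Set (E × E)) (Γ : Set ((E × E) × (F × F))) : Prop :=
  IsABPair A Γ ∧ ranR (G0 Γ) = Set.univ
def IsUnitaryPair (A : Set (E × E)) (Γ : Set ((E × E) × (F × F))) : Prop :=
  GreenPair Γ ∧ domR Γ ⊆ adjR A ∧ IsDomDense A Γ ∧ invR Γ = kreinAdj Γ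
def IsUnitaryBT (A : Set (E × E)) (Γ : Set ((E × E) × (F × F))) : Prop :=
  IsUnitaryPair A Γ ∧ mulR Γ = {0}
def IsOrdinaryBT (A : Set (E × E)) (Γ : Set ((E × E) × (F × F))) : Prop :=
  IsIsomPair A Γ ∧ mulR Γ = {0} ∧ domR Γ = adjR A ∧ ranR Γ = Set.univ

def Erel (Γ : Set ((E × E) × (F × F))) (m : ℂ) : Set (F × F) :=
  {p | ∃ u' v', (p.1, u') ∈ weyl Γ m ∧ (p.1, v') ∈ weyl Γ ((starRingEnd ℂ) m) ∧
        p.2 = (2 : ℂ)⁻¹ • (u' + v')}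

def triTransform (Γ : Set ((E × E) × (F × F))) (e : Set (F × F)) :
    Set ((E × E) × (F × F)) :=
  {q | ∃ h h' w, (q.1, (h, h')) ∈ Γ ∧ (h, w) ∈ e ∧ q.2 = (h, w + h')}

def formVal (l : ℂ) (u u' : F) : ℝ :=
  ((l - (starRingEnd ℂ) l)⁻¹ * (⟪u, u'⟫ - ⟪u', u⟫)).re

def FormClosable (l : ℂ) (Ms : Set (F × F)) : Prop :=
  ∀ u u' : ℕ → F, (∀ n, (u n, u' n) ∈ Ms) →
    Tendsto u atTop (nhds (0 : F)) →
    Tendsto (fun nm : ℕ × ℕ => formVal l (u nm.1 - u nm.2) (u' nm.1 - u' nm.2)) atTop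
      (nhds (0 : ℝ)) →
    Tendsto (fun n => formVal l (u n) (u' n)) atTop (nhds (0 : ℝ))

def formClosureDom (l : ℂ) (Ms : Set (F × F)) : Set F :=
  {v | ∃ u u' : ℕ → F, (∀ n, (u n, u' n) ∈ Ms) ∧ Tendsto u atTop (nhds v) ∧
    Tendsto (fun nm : ℕ × ℕ => formVal l (u nm.1 - u nm.2) (u' nm.1 - u' nm.2)) atTop
      (nhds (0 : ℝ))}

end InnerDefs

section CompleteDefs
variable {F : Type*} [NormedAddCommGroup F] [InnerProductSpace ℂ F] [CompleteSpace F]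

def IsNevFun (M₀ : ℂ → F →L[ℂ] F) : Prop :=
  DifferentiableOn ℂ M₀ {l : ℂ | l.im ≠ 0} ∧
  (∀ l : ℂ, l.im ≠ 0 → M₀ ((starRingEnd ℂ) l) = ContinuousLinearMap.adjoint (M₀ l)) ∧
  (∀ l : ℂ, 0 < l.im → ∀ u, 0 ≤ (⟪u, M₀ l u⟫).im)

def ImOp (Tb : F →L[ℂ] F) : F →L[ℂ] F :=
  ((2 : ℂ) * Complex.I)⁻¹ • (Tb - ContinuousLinearMap.adjoint Tb)

end CompleteDefs

variable {E F : Type*} [NormedAddCommGroup E] [InnerProductSpace ℂ E] [CompleteSpace E]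
  [NormedAddCommGroup F] [InnerProductSpace ℂ F] [CompleteSpace F]

/-- The relation `γ̂(l) = {(Γ₀ f̂, f̂) : f̂ ∈ N̂_l(dom Γ)}`. -/
def hatGamma (Γ : Set ((E × E) × (F × F))) (l : ℂ) : Set (F × (E × E)) :=
  {q | q.2 ∈ hatN (domR Γ) l ∧ (q.2, q.1) ∈ G0 Γ}

/-!
Unitarity of `Γ` makes its main transform `{((f, h), (f', -h')) : ((f, f'), (h, h')) ∈ Γ}`
a self-adjoint relation in `𝔥 ⊕ 𝓗`. For nonreal `λ` a self-adjoint relation `S` has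
`ran (S - λ)` equal to the whole space and `|Im λ| ‖x‖ ≤ ‖y - λ x‖` on `(x, y) ∈ S`; so every
defect `v ∈ 𝔥` is `g' - λ g` for some `(ĝ, (k, k')) ∈ Γ` with `g` and `k` of norm at most
`‖v‖ / |Im λ|`. If `(û_n, h_n) ∈ graph Γ₀` tends to `(f̂, h)` with `f̂ ∈ N̂_λ(A*)`, the defects
`u_n' - λ u_n` tend to `0`, and subtracting these corrections moves `û_n` into `N̂_λ(T)` at a
cost tending to `0`. The reverse inclusion holds because the right-hand side is closed.
-/

lemma tendsto_zero_of_mul_norm_le {ι X Y : Type*} [SeminormedAddCommGroup X]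
    [SeminormedAddCommGroup Y] {L : Filter ι} {a : ι → X} {v : ι → Y} {c : ℝ} (hc : 0 < c)
    (h : ∀ n, c * ‖a n‖ ≤ ‖v n‖) (hv : Tendsto v L (𝓝 0)) : Tendsto a L (𝓝 0) := by
  refine squeeze_zero_norm (fun n => ?_) (by simpa using hv.norm.const_mul c⁻¹)
  rw [inv_mul_eq_div, le_div_iff₀' hc]
  exact h n

lemma isClosed_invR {α β : Type*} [TopologicalSpace α] [TopologicalSpace β] {T : Set (α × β)}
    (hT : IsClosed T) : IsClosed (invR T) :=
  hT.preimage continuous_swap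

lemma isClosed_hatN {α : Type*} [TopologicalSpace α] [AddCommGroup α] [Module ℂ α]
    [ContinuousConstSMul ℂ α] [T2Space α] {T : Set (α × α)} (hT : IsClosed T) (l : ℂ) :
    IsClosed (hatN T l) :=
  hT.inter (isClosed_eq continuous_snd (continuous_fst.const_smul l))

section InnerProductRelations

variable {G G' : Type*} [NormedAddCommGroup G] [InnerProductSpace ℂ G]
  [NormedAddCommGroup G'] [InnerProductSpace ℂ G']

def adjRSubmodule (S : Set (G' × G)) : Submodule ℂ (G × G') where
  carrier := adjR S
  zero_mem' := fun _ _ => by simp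
  add_mem' := fun hp hq r hr => by
    simp only [Prod.fst_add, Prod.snd_add, inner_add_left, hp r hr, hq r hr]
  smul_mem' := fun c p hp r hr => by
    simp only [Prod.smul_fst, Prod.smul_snd, inner_smul_left, hp r hr]

lemma isClosed_adjR (S : Set (G' × G)) : IsClosed (adjR S) := by
  have h : adjR S = ⋂ q ∈ S, {p : G × G' | ⟪p.1, q.2⟫ = ⟪p.2, q.1⟫} := by
    ext p; simp [adjR]
  rw [h]
  exact isClosed_biInter fun q _ => isClosed_eq
    (continuous_fst.inner continuous_const) (continuous_snd.inner continuous_const)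

lemma abs_im_mul_norm_le_norm_sub_smul {S : Set (G × G)} (hS : S ⊆ adjR S) {q : G × G}
    (hq : q ∈ S) (μ : ℂ) : |μ.im| * ‖q.1‖ ≤ ‖q.2 - μ • q.1‖ := by
  have hreal : (⟪q.1, q.2⟫).im = 0 :=
    Complex.conj_eq_iff_im.mp (by rw [inner_conj_symm]; exact (hS hq q hq).symm)
  have him : (⟪q.1, q.2 - μ • q.1⟫).im = -(μ.im * ‖q.1‖ ^ 2) := by
    simp [inner_self_eq_norm_sq_to_K, hreal, ← Complex.ofReal_pow]
  have hle : |μ.im| * ‖q.1‖ ^ 2 ≤ ‖q.1‖ * ‖q.2 - μ • q.1‖ := by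
    calc |μ.im| * ‖q.1‖ ^ 2 = |(⟪q.1, q.2 - μ • q.1⟫).im| := by
          rw [him, abs_neg, abs_mul, abs_of_nonneg (sq_nonneg ‖q.1‖)]
      _ ≤ ‖⟪q.1, q.2 - μ • q.1⟫‖ := Complex.abs_im_le_norm _
      _ ≤ ‖q.1‖ * ‖q.2 - μ • q.1‖ := norm_inner_le_norm _ _
  rcases (norm_nonneg q.1).eq_or_lt with hzero | hpos
  · rw [← hzero, mul_zero]; exact norm_nonneg _
  · nlinarith

def sndSubSmulFst (l : ℂ) : G × G →L[ℂ] G :=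
  ContinuousLinearMap.snd ℂ G G - l • ContinuousLinearMap.fst ℂ G G

lemma sndSubSmulFst_apply (l : ℂ) (q : G × G) : sndSubSmulFst l q = q.2 - l • q.1 := rfl

lemma norm_le_of_adjR_subset {S : Set (G × G)} (hS : S ⊆ adjR S) {l : ℂ} (hl : l.im ≠ 0)
    {q : G × G} (hq : q ∈ S) : ‖q‖ ≤ (1 + (1 + ‖l‖) / |l.im|) * ‖q.2 - l • q.1‖ := by
  set v := q.2 - l • q.1
  have hc : 0 < |l.im| := abs_pos.mpr hl
  have hx : ‖q.1‖ ≤ ‖v‖ / |l.im| :=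
    (le_div_iff₀' hc).mpr (abs_im_mul_norm_le_norm_sub_smul hS hq l)
  have hy : ‖q.2‖ ≤ ‖v‖ + ‖l‖ * (‖v‖ / |l.im|) :=
    calc ‖q.2‖ = ‖v + l • q.1‖ := by rw [sub_add_cancel]
      _ ≤ ‖v‖ + ‖l‖ * ‖q.1‖ := (norm_add_le _ _).trans_eq (by rw [norm_smul])
      _ ≤ ‖v‖ + ‖l‖ * (‖v‖ / |l.im|) := by gcongr
  have hK : (1 + (1 + ‖l‖) / |l.im|) * ‖v‖ = ‖v‖ + ‖v‖ / |l.im| + ‖l‖ * (‖v‖ / |l.im|) := by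
    ring
  have : 0 ≤ ‖v‖ / |l.im| := by positivity
  have : 0 ≤ ‖l‖ * (‖v‖ / |l.im|) := by positivity
  have := norm_nonneg v
  exact norm_prod_le_iff.mpr ⟨by linarith, by linarith⟩

lemma isClosed_map_sndSubSmulFst [CompleteSpace G] {p : Submodule ℂ (G × G)}
    (hp : IsClosed (p : Set (G × G))) (hsym : (p : Set (G × G)) ⊆ adjR p) {l : ℂ}
    (hl : l.im ≠ 0) : IsClosed (p.map (sndSubSmulFst l).toLinearMap : Set G) := by
  have : CompleteSpace p := hp.completeSpace_coe
  let f : p →L[ℂ] G := (sndSubSmulFst l).comp p.subtypeL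
  have hf : AntilipschitzWith ⟨1 + (1 + ‖l‖) / |l.im|, by positivity⟩ f :=
    f.antilipschitz_of_bound fun q => norm_le_of_adjR_subset hsym hl q.2
  convert hf.isClosed_range f.uniformContinuous
  ext w
  simp [f, sndSubSmulFst_apply]

lemma orthogonal_map_sndSubSmulFst_eq_bot {p : Submodule ℂ (G × G)}
    (hp : adjR (p : Set (G × G)) = p) {l : ℂ} (hl : l.im ≠ 0) :
    (p.map (sndSubSmulFst l).toLinearMap)ᗮ = ⊥ := by
  rw [Submodule.eq_bot_iff]
  intro w hw
  have hmem : (w, starRingEnd ℂ l • w) ∈ p := by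
    rw [← SetLike.mem_coe, ← hp]
    intro q hq
    have h := (Submodule.mem_orthogonal' _ w).mp hw _ (Submodule.mem_map_of_mem hq)
    rw [ContinuousLinearMap.coe_coe, sndSubSmulFst_apply, inner_sub_right, inner_smul_right,
      sub_eq_zero] at h
    rw [inner_smul_left, Complex.conj_conj]
    exact h
  have h := abs_im_mul_norm_le_norm_sub_smul hp.superset hmem (starRingEnd ℂ l)
  rw [sub_self, norm_zero, Complex.conj_im, abs_neg] at h
  exact norm_le_zero_iff.mp (nonpos_of_mul_nonpos_right h (abs_pos.mpr hl))

lemma exists_sub_smul_eq_of_adjR_eq [CompleteSpace G] {S : Set (G × G)} (hS : adjR S = S)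
    {l : ℂ} (hl : l.im ≠ 0) (v : G) : ∃ q ∈ S, q.2 - l • q.1 = v := by
  let p := adjRSubmodule S
  have hpS : (p : Set (G × G)) = S := hS
  have hp : adjR (p : Set (G × G)) = p := by rw [hpS, hS]
  have : CompleteSpace (p.map (sndSubSmulFst l).toLinearMap) :=
    (isClosed_map_sndSubSmulFst (isClosed_adjR S) hp.superset hl).completeSpace_coe
  have htop := Submodule.orthogonal_eq_bot_iff.mp (orthogonal_map_sndSubSmulFst_eq_bot hp hl)
  obtain ⟨q, hq, hqv⟩ := Submodule.mem_map.mp (htop ▸ Submodule.mem_top : v ∈ p.map _)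
  exact ⟨q, hpS ▸ hq, hqv⟩

lemma sub_mem_of_invR_eq_kreinAdj {Γ : Set ((G × G) × (G' × G'))} (hΓ : invR Γ = kreinAdj Γ)
    {p q : (G × G) × (G' × G')} (hp : p ∈ Γ) (hq : q ∈ Γ) : p - q ∈ Γ := by
  have hp' : p.swap ∈ kreinAdj Γ := hΓ ▸ hp
  have hq' : q.swap ∈ kreinAdj Γ := hΓ ▸ hq
  have hpq : (p - q).swap ∈ kreinAdj Γ := by
    intro r hr
    have h1 := hp' r hr
    have h2 := hq' r hr
    simp only [kIP, Prod.fst_swap, Prod.snd_swap, Prod.fst_sub, Prod.snd_sub,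
      inner_sub_left] at h1 h2 ⊢
    linear_combination h1 - h2
  rw [← hΓ] at hpq
  exact hpq

def mainTransform (Γ : Set ((G × G) × (G' × G'))) :
    Set (WithLp 2 (G × G') × WithLp 2 (G × G')) :=
  {p | ((p.1.fst, p.2.fst), (p.1.snd, -p.2.snd)) ∈ Γ}

lemma inner_sub_inner_toLp_eq_kIP (q : WithLp 2 (G × G') × WithLp 2 (G × G'))
    (r : (G × G) × (G' × G')) :
    ⟪q.1, WithLp.toLp 2 (r.1.2, -r.2.2)⟫ - ⟪q.2, WithLp.toLp 2 (r.1.1, r.2.1)⟫ =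
      Complex.I * (kIP r.1 (q.1.fst, q.2.fst) - kIP r.2 (q.1.snd, -q.2.snd)) := by
  simp only [WithLp.prod_inner_apply, WithLp.ofLp_fst, WithLp.ofLp_snd, kIP,
    inner_neg_right, inner_neg_left]
  linear_combination (⟪q.1.fst, r.1.2⟫ - ⟪q.1.snd, r.2.2⟫ - ⟪q.2.fst, r.1.1⟫ -
    ⟪q.2.snd, r.2.1⟫) * Complex.I_sq

lemma adjR_mainTransform {Γ : Set ((G × G) × (G' × G'))} (hΓ : invR Γ = kreinAdj Γ) :
    adjR (mainTransform Γ) = mainTransform Γ := by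
  ext q
  have hq : q ∈ mainTransform Γ ↔
      ∀ r ∈ Γ, kIP r.1 (q.1.fst, q.2.fst) = kIP r.2 (q.1.snd, -q.2.snd) :=
    Set.ext_iff.mp hΓ ((q.1.snd, -q.2.snd), (q.1.fst, q.2.fst))
  rw [hq]
  constructor
  · intro h r hr
    have hr' : (WithLp.toLp 2 (r.1.1, r.2.1), WithLp.toLp 2 (r.1.2, -r.2.2)) ∈
        mainTransform Γ := by
      simpa [mainTransform] using hr
    have h0 := inner_sub_inner_toLp_eq_kIP q r
    rw [h _ hr', sub_self, eq_comm, mul_eq_zero, sub_eq_zero] at h0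
    exact h0.resolve_left Complex.I_ne_zero
  · intro h r hr
    have h0 := inner_sub_inner_toLp_eq_kIP q ((r.1.fst, r.2.fst), (r.1.snd, -r.2.snd))
    simpa [h _ hr, sub_eq_zero] using h0

lemma exists_mem_sub_smul_eq [CompleteSpace G] [CompleteSpace G']
    {Γ : Set ((G × G) × (G' × G'))} (hΓ : invR Γ = kreinAdj Γ) {l : ℂ} (hl : l.im ≠ 0)
    (v : G) : ∃ c ∈ Γ, c.1.2 - l • c.1.1 = v ∧ |l.im| * ‖c.1.1‖ ≤ ‖v‖ ∧
      |l.im| * ‖c.2.1‖ ≤ ‖v‖ := by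
  have hsa := adjR_mainTransform hΓ
  obtain ⟨q, hq, hqv⟩ := exists_sub_smul_eq_of_adjR_eq hsa hl (WithLp.toLp 2 (v, (0 : G')))
  have hb := abs_im_mul_norm_le_norm_sub_smul hsa.superset hq l
  rw [hqv, WithLp.norm_toLp_fst] at hb
  refine ⟨_, hq, by simpa using congrArg WithLp.fst hqv, ?_, ?_⟩
  · exact (mul_le_mul_of_nonneg_left (WithLp.norm_fst_le _ q.1) (abs_nonneg _)).trans hb
  · exact (mul_le_mul_of_nonneg_left (WithLp.norm_snd_le _ q.1) (abs_nonneg _)).trans hb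

lemma closure_hatGamma_subset {H : Type*} [TopologicalSpace H] {A : Set (G × G)}
    {Γ : Set ((G × G) × (H × H))} (hdom : domR Γ ⊆ adjR A) (l : ℂ) :
    closure (hatGamma Γ l) ⊆ invR {q ∈ closure (G0 Γ) | q.1 ∈ hatN (adjR A) l} := by
  refine closure_minimal ?_ (isClosed_invR (isClosed_closure.inter
    ((isClosed_hatN (isClosed_adjR A) l).preimage continuous_fst)))
  rintro ⟨h, f⟩ ⟨hfN, hfG⟩
  exact ⟨subset_closure hfG, hdom hfN.1, hfN.2⟩

end InnerProductRelations

lemma mem_closure_hatGamma {Γ : Set ((E × E) × (F × F))} (hΓ : invR Γ = kreinAdj Γ) {l : ℂ}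
    (hl : l.im ≠ 0) {f : E × E} {h : F} (hf : f.2 = l • f.1) (hfh : (f, h) ∈ closure (G0 Γ)) :
    (h, f) ∈ closure (hatGamma Γ l) := by
  obtain ⟨u, hu, hlim⟩ := mem_closure_iff_seq_limit.mp hfh
  choose h' hh' using hu
  set v : ℕ → E := fun n => (u n).1.2 - l • (u n).1.1
  have hv : Tendsto v atTop (𝓝 0) := by
    have := hlim.fst_nhds.snd_nhds.sub (hlim.fst_nhds.fst_nhds.const_smul l)
    rwa [hf, sub_self] at this
  choose c hcΓ hcv hc₁ hc₂ using fun n => exists_mem_sub_smul_eq hΓ hl (v n)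
  have hpos : 0 < |l.im| := abs_pos.mpr hl
  have hc₁0 := tendsto_zero_of_mul_norm_le hpos hc₁ hv
  have hc₂0 := tendsto_zero_of_mul_norm_le hpos hc₂ hv
  have hc0 : Tendsto (fun n => (c n).1) atTop (𝓝 0) := by
    have h := hc₁0.prodMk_nhds (hv.add (hc₁0.const_smul l))
    rw [smul_zero, add_zero, Prod.mk_zero_zero] at h
    refine (tendsto_congr fun n => ?_).mp h
    exact Prod.ext rfl (sub_eq_iff_eq_add.mp (hcv n)).symm
  refine mem_closure_iff_seq_limit.mpr
    ⟨fun n => ((u n).2 - (c n).2.1, (u n).1 - (c n).1), fun n => ?_, ?_⟩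
  · have hmem := sub_mem_of_invR_eq_kreinAdj hΓ (hh' n) (hcΓ n)
    refine ⟨⟨⟨_, hmem⟩, ?_⟩, ⟨_, hmem⟩⟩
    rw [Prod.snd_sub, Prod.fst_sub, smul_sub, sub_eq_sub_iff_sub_eq_sub, hcv n]
  · simpa using (hlim.snd_nhds.sub hc₂0).prodMk_nhds (hlim.fst_nhds.sub hc0)

lemma closure_hatGamma {A : Set (E × E)} {Γ : Set ((E × E) × (F × F))}
    (hdom : domR Γ ⊆ adjR A) (hΓ : invR Γ = kreinAdj Γ) {l : ℂ} (hl : l.im ≠ 0) :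
    closure (hatGamma Γ l) = invR {q ∈ closure (G0 Γ) | q.1 ∈ hatN (adjR A) l} :=
  (closure_hatGamma_subset hdom l).antisymm fun _ ⟨hfh, _, hf⟩ =>
    mem_closure_hatGamma hΓ hl hf hfh

theorem statement13_general (A : Set (E × E)) (Γ : Set ((E × E) × (F × F)))
    (hU : IsUnitaryBT A Γ) :
    ∀ l : ℂ, l.im ≠ 0 →
      closure (hatGamma Γ l) = invR {q ∈ closure (G0 Γ) | q.1 ∈ hatN (adjR A) l} ∧
      kerR (closure (hatGamma Γ l)) = mulR (closure (G0 Γ)) ∧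
      mulR (closure (hatGamma Γ l)) = kerR (closure (G0 Γ)) ∩ hatN (adjR A) l ∧
      ranR (closure (hatGamma Γ l)) = domR (closure (G0 Γ)) ∩ hatN (adjR A) l ∧
      domR (closure (hatGamma Γ l)) =
        {h : F | ∃ p ∈ hatN (adjR A) l, (p, h) ∈ closure (G0 Γ)} := by
  intro l hl
  obtain ⟨⟨-, hdom, -, hΓ⟩, -⟩ := hU
  have hclos := closure_hatGamma hdom hΓ hl
  have h0 : (0 : E × E) ∈ hatN (adjR A) l := ⟨fun _ _ => by simp, by simp⟩
  refine ⟨hclos, ?_, ?_, ?_, ?_⟩ <;> rw [hclos] <;> ext <;>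
    simp [kerR, mulR, domR, ranR, invR, h0, and_comm]

/-- the closure of the γ-field relation of a unitary boundary triple
equals the inverse of the restriction of the closure of `Γ₀` to `N̂_λ(A*)`. -/
theorem statement13 (A : Set (E × E)) (Γ : Set ((E × E) × (F × F)))
    (hA : IsClosedSymRel A) (hU : IsUnitaryBT A Γ) :
    ∀ l : ℂ, l.im ≠ 0 →
      closure (hatGamma Γ l) = invR {q ∈ closure (G0 Γ) | q.1 ∈ hatN (adjR A) l} ∧
      kerR (closure (hatGamma Γ l)) = mulR (closure (G0 Γ)) ∧
      mulR (closure (hatGamma Γ l)) = kerR (closure (G0 Γ)) ∩ hatN (adjR A) l ∧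
      ranR (closure (hatGamma Γ l)) = domR (closure (G0 Γ)) ∩ hatN (adjR A) l ∧
      domR (closure (hatGamma Γ l)) =
        {h : F | ∃ p ∈ hatN (adjR A) l, (p, h) ∈ closure (G0 Γ)} :=
  statement13_general A Γ hU

end BT
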